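/- arXiv:1803.00792 — 2 statements merged into one kernel-verified Lean document; each statement's English description precedes it below -/
import Mathlib

section
/- For γ ∈ (1,2), the double integral ∬_{[0,1]²} (u^{γ−1} − v^{γ−1})² / |u−v|^{γ+1} du dv is finite. -/
/-!
Write `s = γ - 1 ∈ (0, 1)` and let `0 ≤ v < u`. The difference `D = u ^ s - v ^ s` satisfies
`D ≤ (u - v) ^ s` (subadditivity of `x ↦ x ^ s`) and `D ≤ u ^ (s - 1) (u - v)` (as `v ^ (s - 1) ≥
u ^ (s - 1)`). Interpolating with weight `t` bounds the integrand by `u ^ a (u - v) ^ b`, where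
`a = 2 (s - 1) t` and `a + b = s - 2`; for `t = (γ + 1) / 4` both exponents exceed `-1`. The shear
`(u, v) ↦ (u, v - u)` preserves Lebesgue measure and turns `u ^ a |v - u| ^ b` into the product
function `u ^ a |w| ^ b` on `[0, 1] × [-1, 1]`, which is integrable.
-/

open MeasureTheory Set

lemma le_rpow_mul_rpow_of_le_of_le {x A B t : ℝ} (hx : 0 ≤ x) (hA : x ≤ A) (hB : x ≤ B)
    (ht0 : 0 ≤ t) (ht1 : t ≤ 1) : x ≤ A ^ (1 - t) * B ^ t := by
  calc x = x ^ (1 - t) * x ^ t := by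
        rw [← Real.rpow_add' hx (by norm_num), sub_add_cancel, Real.rpow_one]
    _ ≤ A ^ (1 - t) * B ^ t :=
        mul_le_mul (Real.rpow_le_rpow hx hA (by linarith)) (Real.rpow_le_rpow hx hB ht0)
          (Real.rpow_nonneg hx _) (Real.rpow_nonneg (hx.trans hA) _)

lemma rpow_sub_rpow_le_rpow_sub {u v s : ℝ} (hv : 0 ≤ v) (hvu : v ≤ u) (hs0 : 0 ≤ s)
    (hs1 : s ≤ 1) :
    u ^ s - v ^ s ≤ (u - v) ^ s := by
  have := Real.rpow_add_le_add_rpow (sub_nonneg.2 hvu) hv hs0 hs1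
  rw [sub_add_cancel] at this
  linarith

lemma rpow_sub_rpow_le_rpow_sub_one_mul {u v s : ℝ} (hv : 0 ≤ v) (hvu : v ≤ u) (hu : 0 < u)
    (hs : s ≤ 1) : u ^ s - v ^ s ≤ u ^ (s - 1) * (u - v) := by
  suffices u ^ (s - 1) * v ≤ v ^ s by
    have hu' : u ^ (s - 1) * u = u ^ s := by
      rw [Real.rpow_sub_one hu.ne', div_mul_cancel₀ _ hu.ne']
    rw [mul_sub, hu']
    linarith
  rcases hv.eq_or_lt with rfl | hv
  · simpa using Real.rpow_nonneg le_rfl s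
  · calc u ^ (s - 1) * v ≤ v ^ (s - 1) * v :=
          mul_le_mul_of_nonneg_right (Real.rpow_le_rpow_of_nonpos hv hvu (by linarith)) hv.le
      _ = v ^ s := by rw [Real.rpow_sub_one hv.ne', div_mul_cancel₀ _ hv.ne']

lemma sq_rpow_sub_rpow_div_rpow_sub_le {u v s t : ℝ} (hv : 0 ≤ v) (hvu : v < u) (hs0 : 0 ≤ s)
    (hs1 : s ≤ 1) (ht0 : 0 ≤ t) (ht1 : t ≤ 1) :
    (u ^ s - v ^ s) ^ 2 / (u - v) ^ (s + 2) ≤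
      u ^ (2 * (s - 1) * t) * (u - v) ^ (s - 2 - 2 * (s - 1) * t) := by
  have hu : 0 < u := hv.trans_lt hvu
  have hw : 0 < u - v := sub_pos.2 hvu
  have hD : 0 ≤ u ^ s - v ^ s := sub_nonneg.2 (Real.rpow_le_rpow hv hvu.le hs0)
  have hinterp := le_rpow_mul_rpow_of_le_of_le hD (rpow_sub_rpow_le_rpow_sub hv hvu.le hs0 hs1)
    (rpow_sub_rpow_le_rpow_sub_one_mul hv hvu.le hu hs1) ht0 ht1
  calc (u ^ s - v ^ s) ^ 2 / (u - v) ^ (s + 2)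
      ≤ (((u - v) ^ s) ^ (1 - t) * (u ^ (s - 1) * (u - v)) ^ t) ^ 2 / (u - v) ^ (s + 2) := by
        gcongr
    _ = u ^ (2 * (s - 1) * t) * (u - v) ^ (s - 2 - 2 * (s - 1) * t) := by
        simp only [Real.rpow_def_of_pos hu, Real.rpow_def_of_pos hw,
          Real.rpow_def_of_pos (Real.exp_pos _), Real.rpow_def_of_pos (mul_pos (Real.exp_pos _) hw),
          Real.log_mul (Real.exp_pos _).ne' hw.ne', Real.log_exp, ← Real.exp_add, ← Real.exp_sub,
          ← Real.exp_nat_mul]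
        congr 1
        push_cast
        ring

lemma sq_rpow_sub_rpow_div_abs_le {u v s t : ℝ} (hu : 0 ≤ u) (hv : 0 ≤ v) (hs0 : 0 ≤ s)
    (hs1 : s ≤ 1) (ht0 : 0 ≤ t) (ht1 : t ≤ 1) :
    (u ^ s - v ^ s) ^ 2 / |u - v| ^ (s + 2) ≤
      u ^ (2 * (s - 1) * t) * |v - u| ^ (s - 2 - 2 * (s - 1) * t) +
        v ^ (2 * (s - 1) * t) * |u - v| ^ (s - 2 - 2 * (s - 1) * t) := by
  rcases lt_trichotomy u v with huv | rfl | hvu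
  · have hw := sub_pos.2 huv
    have := sq_rpow_sub_rpow_div_rpow_sub_le hu huv hs0 hs1 ht0 ht1
    have := mul_nonneg (Real.rpow_nonneg hu (2 * (s - 1) * t))
      (Real.rpow_nonneg hw.le (s - 2 - 2 * (s - 1) * t))
    rw [abs_sub_comm u v, abs_of_pos hw, sub_sq_comm]
    linarith
  · simp only [sub_self, zero_pow two_ne_zero, zero_div]
    positivity
  · have hw := sub_pos.2 hvu
    have := sq_rpow_sub_rpow_div_rpow_sub_le hv hvu hs0 hs1 ht0 ht1
    have := mul_nonneg (Real.rpow_nonneg hv (2 * (s - 1) * t))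
      (Real.rpow_nonneg hw.le (s - 2 - 2 * (s - 1) * t))
    rw [abs_sub_comm v u, abs_of_pos hw]
    linarith

lemma integrableOn_abs_rpow {b : ℝ} (hb : -1 < b) :
    IntegrableOn (fun y : ℝ => |y| ^ b) (Icc (-1) 1) := by
  have hpos : IntervalIntegrable (fun y : ℝ => |y| ^ b) volume 0 1 :=
    (intervalIntegral.intervalIntegrable_rpow' hb).congr fun y hy => by
      rw [uIoc_of_le zero_le_one] at hy
      rw [abs_of_pos hy.1]
  have hneg : IntervalIntegrable (fun y : ℝ => |y| ^ b) volume (-1) 0 := by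
    simpa using ((IntervalIntegrable.iff_comp_neg (by simp)).1 hpos).symm
  rw [integrableOn_Icc_iff_integrableOn_Ioc,
    ← intervalIntegrable_iff_integrableOn_Ioc_of_le (by norm_num)]
  exact hneg.trans hpos

lemma integrableOn_rpow_mul_abs_sub_rpow {a b : ℝ} (ha : -1 < a) (hb : -1 < b) :
    IntegrableOn (fun p : ℝ × ℝ => p.1 ^ a * |p.2 - p.1| ^ b) (Icc 0 1 ×ˢ Icc 0 1) := by
  have hrect :
      IntegrableOn (fun p : ℝ × ℝ => p.1 ^ a * |p.2| ^ b) (Icc 0 1 ×ˢ Icc (-1) 1) := by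
    rw [IntegrableOn, Measure.volume_eq_prod, ← Measure.prod_restrict]
    have hpow : IntegrableOn (fun x : ℝ => x ^ a) (Icc 0 1) := by
      rw [integrableOn_Icc_iff_integrableOn_Ioc]
      exact (intervalIntegral.intervalIntegrable_rpow' ha).1
    exact hpow.mul_prod (integrableOn_abs_rpow hb)
  have hshear := ((measurePreserving_prod_sub volume volume).integrableOn_comp_preimage
    (MeasurableEquiv.shearSubRight ℝ).measurableEmbedding).2 hrect
  exact hshear.mono_set fun p ⟨hu, hv⟩ =>
    ⟨hu, by constructor <;> linarith [hu.1, hu.2, hv.1, hv.2]⟩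

/-- For γ ∈ (1,2), ∬_{[0,1]²} (u^{γ−1} − v^{γ−1})² / |u−v|^{γ+1} du dv is finite. -/
theorem stmt1 (γ : ℝ) (h1 : 1 < γ) (h2 : γ < 2) :
    IntegrableOn (fun p : ℝ × ℝ => (p.1 ^ (γ - 1) - p.2 ^ (γ - 1)) ^ 2 / |p.1 - p.2| ^ (γ + 1))
      (Icc (0:ℝ) 1 ×ˢ Icc (0:ℝ) 1) := by
  have ha : -1 < 2 * (γ - 1 - 1) * ((γ + 1) / 4) := by nlinarith
  have hb : -1 < γ - 1 - 2 - 2 * (γ - 1 - 1) * ((γ + 1) / 4) := by nlinarith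
  have hdom := integrableOn_rpow_mul_abs_sub_rpow ha hb
  refine (hdom.add hdom.swap).mono' (Measurable.aestronglyMeasurable (by fun_prop)) ?_
  filter_upwards [ae_restrict_mem (measurableSet_Icc.prod measurableSet_Icc)] with p ⟨hu, hv⟩
  rw [Real.norm_of_nonneg (by positivity), show γ + 1 = γ - 1 + 2 by ring]
  exact sq_rpow_sub_rpow_div_abs_le hu.1 hv.1 (by linarith) (by linarith) (by linarith)
    (by linarith)
end

section
/- Suppose ρ : [0,T] × (0,1) → [0,1] is such that, for almost every t, ρ_t is (γ−1)/2-Hölder continuous, and ∫₀ᵀ∫₀¹ (ρ_t(u) − α)²/u^γ du dt < ∞ for some γ ∈ (1,2). Then ρ_t extends continuously to u = 0 with ρ_t(0) = α for almost every t ∈ [0,T]. -/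
/-!
Fix a time `t` at which `ρ_t` is Hölder with constant `C` and `g = (ρ_t - α)² / u^γ` is
integrable on `(0,1)`. If `|ρ_t(u) - α| ≥ ε` at a small `u`, the Hölder bound `C u^r ≤ ε/2`
keeps `|ρ_t - α| ≥ ε/2` on all of `(u, 2u)`, so `∫_u^{2u} g ≥ (ε/2)² u^{1-γ} / 2^γ ≥ (ε/2)² / 2^γ`
as `γ ≥ 1`. But `∫_u^{2u} g → 0` as `u → 0` by absolute continuity of the integral.
-/

open MeasureTheory Set Filter Topology

lemma mul_div_rpow_le_setIntegral_Ioo_two_mul {g : ℝ → ℝ} {u c γ : ℝ} (hu : 0 < u) (hγ : 0 ≤ γ)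
    (hc : 0 ≤ c) (hgc : ∀ v ∈ Ioo u (2 * u), c ≤ g v)
    (hg : IntegrableOn (fun v => g v / v ^ γ) (Ioo u (2 * u))) :
    c * u / (2 * u) ^ γ ≤ ∫ v in Ioo u (2 * u), g v / v ^ γ := by
  have hlow : ∀ v ∈ Ioo u (2 * u), c / (2 * u) ^ γ ≤ g v / v ^ γ := fun v hv =>
    div_le_div₀ (hc.trans (hgc v hv)) (hgc v hv) (Real.rpow_pos_of_pos (hu.trans hv.1) _)
      (Real.rpow_le_rpow (hu.trans hv.1).le hv.2.le hγ)
  have hvol : volume.real (Ioo u (2 * u)) = u := by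
    rw [Real.volume_real_Ioo_of_le (by linarith)]
    ring
  calc c * u / (2 * u) ^ γ = c / (2 * u) ^ γ * volume.real (Ioo u (2 * u)) := by
        rw [hvol]; ring
    _ ≤ _ := setIntegral_ge_of_const_le_real measurableSet_Ioo (by simp) hlow hg

lemma tendsto_setIntegral_Ioo_two_mul_nhdsGT_zero {g : ℝ → ℝ} (hg : IntegrableOn g (Ioo 0 1)) :
    Tendsto (fun u => ∫ v in Ioo u (2 * u), g v) (𝓝[>] 0) (𝓝 0) := by
  have hlen : Tendsto (fun u : ℝ => ENNReal.ofReal (2 * u - u)) (𝓝[>] 0) (𝓝 0) := by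
    rw [← ENNReal.ofReal_zero]
    exact ENNReal.tendsto_ofReal ((Continuous.tendsto (by fun_prop) 0).mono_left
      nhdsWithin_le_nhds |>.trans_eq (by norm_num))
  have hvol :
      Tendsto (fun u : ℝ => volume.restrict (Ioo (0 : ℝ) 1) (Ioo u (2 * u))) (𝓝[>] 0) (𝓝 0) :=
    tendsto_of_tendsto_of_tendsto_of_le_of_le tendsto_const_nhds hlen (fun _ => zero_le)
      fun u => (Measure.restrict_apply_le _ _).trans_eq (Real.volume_Ioo)
  refine (hg.tendsto_setIntegral_nhds_zero hvol).congr' ?_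
  filter_upwards [self_mem_nhdsWithin, Iio_mem_nhds (show (0 : ℝ) < 1 / 2 by norm_num)
    |> mem_nhdsWithin_of_mem_nhds] with u (hu0 : 0 < u) (hu : u < 1 / 2)
  rw [Measure.restrict_restrict measurableSet_Ioo,
    inter_eq_left.mpr (Ioo_subset_Ioo hu0.le (by linarith))]

lemma HolderOnWith.half_le_dist_of_le_dist {X Y : Type*} [PseudoMetricSpace X]
    [PseudoMetricSpace Y] {f : X → Y} {C r : NNReal} {s : Set X} (hf : HolderOnWith C r f s)
    {x y : X} {a : Y} {d ε : ℝ} (hx : x ∈ s) (hy : y ∈ s) (hxy : dist x y ≤ d)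
    (hCd : C * d ^ (r : ℝ) ≤ ε / 2) (hfar : ε ≤ dist (f x) a) :
    ε / 2 ≤ dist (f y) a := by
  linarith [(hf.dist_le_of_le hx hy hxy).trans hCd, dist_triangle (f x) (f y) a]

theorem tendsto_nhdsWithin_Ioo_zero_of_holderOnWith_of_integrableOn {f : ℝ → ℝ} {C r : NNReal}
    {a γ : ℝ} (hr : 0 < r) (hγ : 1 ≤ γ) (hf : HolderOnWith C r f (Ioo 0 1))
    (hint : IntegrableOn (fun u => (f u - a) ^ 2 / u ^ γ) (Ioo 0 1)) :
    Tendsto f (𝓝[Ioo 0 1] 0) (𝓝 a) := by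
  rw [Metric.tendsto_nhds]
  intro ε hε
  set c := (ε / 2) ^ 2
  have hHolder : Tendsto (fun u : ℝ => (C : ℝ) * u ^ (r : ℝ)) (𝓝[>] 0) (𝓝 0) := by
    have := ((Real.continuousAt_rpow_const 0 r (Or.inr hr.le)).const_mul (C : ℝ)).tendsto
    simpa [Real.zero_rpow (NNReal.coe_ne_zero.mpr hr.ne')] using this.mono_left nhdsWithin_le_nhds
  have hsmall : ∀ᶠ u in 𝓝[>] 0, 0 < u ∧ u < 1 / 2 ∧ (C : ℝ) * u ^ (r : ℝ) ≤ ε / 2 ∧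
      ∫ v in Ioo u (2 * u), (f v - a) ^ 2 / v ^ γ < c / 2 ^ γ := by
    filter_upwards [self_mem_nhdsWithin,
      mem_nhdsWithin_of_mem_nhds (Iio_mem_nhds (show (0 : ℝ) < 1 / 2 by norm_num)),
      hHolder.eventually (Iic_mem_nhds (half_pos hε)),
      (tendsto_setIntegral_Ioo_two_mul_nhdsGT_zero hint).eventually
        (Iio_mem_nhds (show 0 < c / 2 ^ γ by positivity))] with u hu0 hu hCu hI
    exact ⟨hu0, hu, hCu, hI⟩
  refine nhdsWithin_mono _ Ioo_subset_Ioi_self (hsmall.mono ?_)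
  rintro u ⟨hu0, hu, hCu, hI⟩
  by_contra! hfar
  have hsub : Ioo u (2 * u) ⊆ Ioo 0 1 := Ioo_subset_Ioo hu0.le (by linarith)
  have hfar' : ∀ v ∈ Ioo u (2 * u), c ≤ (f v - a) ^ 2 := by
    intro v hv
    have huv : dist u v ≤ u := by
      rw [Real.dist_eq, abs_le]
      constructor <;> linarith [hv.1, hv.2]
    have hfva := hf.half_le_dist_of_le_dist ⟨hu0, by linarith⟩ (hsub hv) huv hCu hfar
    rw [← sq_abs, ← Real.dist_eq]
    exact pow_le_pow_left₀ (by positivity) hfva 2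
  have hlower := mul_div_rpow_le_setIntegral_Ioo_two_mul hu0 (by linarith) (by positivity) hfar'
    (hint.mono_set hsub)
  have hu_rpow : u ^ γ ≤ u := by
    simpa using Real.rpow_le_rpow_of_exponent_ge hu0 (by linarith) hγ
  have : c / 2 ^ γ ≤ c * u / (2 * u) ^ γ := by
    rw [Real.mul_rpow (by norm_num) hu0.le, div_le_div_iff₀ (by positivity) (by positivity)]
    have : 0 ≤ c * 2 ^ γ := by positivity
    nlinarith
  linarith

theorem stmt12_general (γ T α : ℝ) (h1 : 1 < γ)
    (ρ : ℝ → ℝ → ℝ)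
    (hhold : ∀ᵐ t ∂(volume.restrict (Icc 0 T)),
      ∃ C : NNReal, HolderOnWith C (Real.toNNReal ((γ - 1) / 2)) (ρ t) (Ioo 0 1))
    (hint : IntegrableOn (fun p : ℝ × ℝ => (ρ p.1 p.2 - α) ^ 2 / p.2 ^ γ)
      (Icc (0:ℝ) T ×ˢ Ioo (0:ℝ) 1)) :
    ∀ᵐ t ∂(volume.restrict (Icc (0:ℝ) T)),
      Filter.Tendsto (ρ t) (nhdsWithin 0 (Ioo (0:ℝ) 1)) (nhds α) := by
  have hslice : ∀ᵐ t ∂(volume.restrict (Icc 0 T)),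
      IntegrableOn (fun u => (ρ t u - α) ^ 2 / u ^ γ) (Ioo 0 1) := by
    rw [IntegrableOn, Measure.volume_eq_prod, ← Measure.prod_restrict] at hint
    exact hint.prod_right_ae
  filter_upwards [hslice, hhold] with t hint_t ⟨C, hC⟩
  exact tendsto_nhdsWithin_Ioo_zero_of_holderOnWith_of_integrableOn
    (Real.toNNReal_pos.mpr (by linarith)) h1.le hC hint_t

/-- If for a.e. t the profile ρ_t is (γ−1)/2-Hölder on (0,1) and
∫₀ᵀ∫₀¹ (ρ_t(u)−α)²/u^γ du dt < ∞, then ρ_t(0⁺) = α for a.e. t ∈ [0,T]. -/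
theorem stmt12 (γ T α : ℝ) (h1 : 1 < γ) (h2 : γ < 2) (hT : 0 < T)
    (hα : α ∈ Set.Ioo (0:ℝ) 1)
    (ρ : ℝ → ℝ → ℝ) (hval : ∀ t u, ρ t u ∈ Set.Icc (0:ℝ) 1)
    (hhold : ∀ᵐ t ∂(volume.restrict (Icc 0 T)),
      ∃ C : NNReal, HolderOnWith C (Real.toNNReal ((γ - 1) / 2)) (ρ t) (Ioo 0 1))
    (hint : IntegrableOn (fun p : ℝ × ℝ => (ρ p.1 p.2 - α) ^ 2 / p.2 ^ γ)
      (Icc (0:ℝ) T ×ˢ Ioo (0:ℝ) 1)) :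
    ∀ᵐ t ∂(volume.restrict (Icc (0:ℝ) T)),
      Filter.Tendsto (ρ t) (nhdsWithin 0 (Ioo (0:ℝ) 1)) (nhds α) :=
  stmt12_general γ T α h1 ρ hhold hint
end
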